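/- arXiv:2512.09419 — 2 statements merged into one kernel-verified Lean document; each statement's English description precedes it below -/
import Mathlib

section
/- Let $\Lambda \subset [0,\infty)$ be defined, for a given summable family of moduli, by $\Lambda = \{\sum_{k=1}^\infty n_k |\zeta_k| + E_0 : n_k \in \mathbb{Z}_{\ge 0}, \sum_k n_k < \infty\}$ where $|\zeta_k| \ge 0$, infinitely many $\zeta_k$ equal $1$, and $E_0 \ge 0$ is a constant. Let $\Lambda^a$ be the set of points of $\Lambda$ that are accumulation points or occur with infinite multiplicity. Then $\Lambda^a = \Lambda + \mathbb{N} := \{x + n : x \in \Lambda, n \in \mathbb{N}\}$, this set is closed, and $\Lambda^a \subset \Lambda$. -/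
/-!
The moduli are bounded below by a positive constant, so values below a fixed bound use at most
`M` quanta (`Finsupp.degree`). Only finitely many modes are `ε`-far from `1`, so among infinitely
many representations close to `x` one puts `m ≥ 1` quanta on modes that are `ε`-close to `1`:
then `x` is within `ε * M` of a value with at most `M - m` quanta, plus `m`. By strong induction
on `M` the values with at most `M` quanta form a closed set (a quantum moved onto a mode with
`z k = 1` adds exactly `1`), so `x` itself is such a value plus a positive integer. Infinitely
many modes with `z k = 1` give every such point infinite multiplicity.
-/

open Finsupp Metric

lemma infinite_setOf_mem_of_accPt_image {α X : Type*} [TopologicalSpace X] [T1Space X]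
    {f : α → X} {s : Set α} {x : X} (hx : AccPt x (Filter.principal (f '' s)))
    {U : Set X} (hU : U ∈ nhds x) : {a | a ∈ s ∧ f a ∈ U}.Infinite := by
  refine Set.Infinite.of_image f ((Set.Infinite.of_accPt (hx.nhds_inter hU)).mono ?_)
  rintro _ ⟨hyU, a, ha, rfl⟩
  exact ⟨a, ⟨ha, hyU⟩, rfl⟩

namespace ExcitationSpectrum

variable {z : ℕ → ℝ}

lemma abs_weight_sub_degree_le {ε : ℝ} {t : ℕ →₀ ℕ} (h : ∀ k ∈ t.support, |z k - 1| ≤ ε) :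
    |weight z t - t.degree| ≤ ε * t.degree := by
  rw [weight_apply, degree_apply, Finsupp.sum, Nat.cast_sum, ← Finset.sum_sub_distrib,
    Finset.mul_sum]
  refine (Finset.abs_sum_le_sum_abs _ _).trans (Finset.sum_le_sum fun k hk => ?_)
  rw [nsmul_eq_mul, ← mul_sub_one, abs_mul, Nat.abs_cast, mul_comm]
  exact mul_le_mul_of_nonneg_right (h k hk) (Nat.cast_nonneg _)

lemma mul_degree_le_weight {c : ℝ} (hc : ∀ k, c ≤ z k) (n : ℕ →₀ ℕ) :
    c * n.degree ≤ weight z n := by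
  rw [weight_apply, degree_apply, Finsupp.sum, Nat.cast_sum, Finset.mul_sum]
  refine Finset.sum_le_sum fun k _ => ?_
  rw [nsmul_eq_mul, mul_comm]
  exact mul_le_mul_of_nonneg_left (hc k) (Nat.cast_nonneg _)

lemma exists_pos_forall_le (hzpos : ∀ k, 0 < z k)
    (hzacc : ∀ ε : ℝ, 0 < ε → {k | ε ≤ |z k - 1|}.Finite) : ∃ c > 0, ∀ k, c ≤ z k := by
  set F := (hzacc (1 / 2) one_half_pos).toFinset
  have hT : (insert (1 / 2 : ℝ) (F.image z)).Nonempty := Finset.insert_nonempty _ _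
  refine ⟨_, (Finset.lt_min'_iff _ hT).2 ?_, fun k => ?_⟩
  · simp only [Finset.mem_insert, Finset.mem_image]
    rintro _ (rfl | ⟨k, -, rfl⟩)
    exacts [one_half_pos, hzpos k]
  · by_cases hk : k ∈ F
    · exact Finset.min'_le _ _ (Finset.mem_insert_of_mem (Finset.mem_image_of_mem z hk))
    · have hnear : |z k - 1| < 1 / 2 := by simpa [F] using hk
      have := (Finset.min'_le _ _ (Finset.mem_insert_self (1 / 2 : ℝ) (F.image z)))
      linarith [(abs_lt.1 hnear).1]

lemma exists_degree_le_of_weight_lt (hzpos : ∀ k, 0 < z k)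
    (hzacc : ∀ ε : ℝ, 0 < ε → {k | ε ≤ |z k - 1|}.Finite) (y : ℝ) :
    ∃ M : ℕ, ∀ n : ℕ →₀ ℕ, weight z n < y → n.degree ≤ M := by
  obtain ⟨c, hc0, hc⟩ := exists_pos_forall_le hzpos hzacc
  refine ⟨⌈y / c⌉₊, fun n hn => Nat.cast_le.1 ((le_div_iff₀ hc0).2 ?_ |>.trans (Nat.le_ceil _))⟩
  linarith [mul_degree_le_weight hc n]

lemma weight_add_single_of_eq_one {k : ℕ} (hk : z k = 1) (n : ℕ →₀ ℕ) (j : ℕ) :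
    weight z (n + single k j) = weight z n + j := by
  rw [map_add, weight_single, hk, nsmul_one]

lemma finite_setOf_support_subset_degree_le {ι : Type*} (A : Finset ι) (M : ℕ) :
    {n : ι →₀ ℕ | n.support ⊆ A ∧ n.degree ≤ M}.Finite := by
  classical
  refine ((Finset.range (M + 1)).biUnion A.finsuppAntidiag).finite_toSet.subset ?_
  rintro n ⟨hA, hM⟩
  simp only [Finset.coe_biUnion, Finset.coe_range, Set.mem_Iio, Set.mem_iUnion, Finset.mem_coe,
    Finset.mem_finsuppAntidiag, exists_prop]
  refine ⟨n.degree, Nat.lt_succ_of_le hM, ?_, hA⟩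
  rw [degree_apply]
  exact (Finset.sum_subset hA fun k _ hk => notMem_support_iff.1 hk).symm

lemma exists_shift_near (hzacc : ∀ ε : ℝ, 0 < ε → {k | ε ≤ |z k - 1|}.Finite)
    {M : ℕ} {x δ ε : ℝ} (hε : 0 < ε)
    (hS : {n : ℕ →₀ ℕ | n.degree ≤ M ∧ dist (weight z n) x < δ}.Infinite) :
    ∃ r : ℕ →₀ ℕ, ∃ m : ℕ, 0 < m ∧ r.degree + m ≤ M ∧ dist (weight z r + m) x < δ + ε * M := by
  classical
  set A := (hzacc ε hε).toFinset
  obtain ⟨n, ⟨hnM, hnx⟩, hnA⟩ :=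
    (hS.sdiff (finite_setOf_support_subset_degree_le A M)).nonempty
  obtain ⟨k, hkn, hkA⟩ := Set.not_subset.1 fun h => hnA ⟨h, hnM⟩
  -- Only finitely many modes are `ε`-far from `1`; the rest of `n` is an integer up to `ε * M`.
  set r := n.filter (· ∈ A)
  set t := n.filter (· ∉ A)
  have hsplit : r + t = n := filter_add_filter_not n _
  have ht : 0 < t.degree := by
    refine Nat.pos_of_ne_zero fun h => ?_
    have : t k = 0 := by rw [(degree_eq_zero_iff t).1 h, coe_zero, Pi.zero_apply]
    rw [filter_apply_pos (· ∉ A) n hkA] at this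
    exact mem_support_iff.1 hkn this
  have hdeg : r.degree + t.degree ≤ M := by rwa [← map_add, hsplit]
  have htail : |weight z t - t.degree| ≤ ε * M := by
    refine (abs_weight_sub_degree_le fun i hi => ?_).trans
      (mul_le_mul_of_nonneg_left (by exact_mod_cast (Nat.le_add_left _ _).trans hdeg) hε.le)
    rw [support_filter, Finset.mem_filter] at hi
    exact (by simpa [A] using hi.2 : |z i - 1| < ε).le
  refine ⟨r, t.degree, ht, hdeg, ?_⟩
  calc dist (weight z r + t.degree) x
      ≤ dist (weight z r + t.degree) (weight z n) + dist (weight z n) x := dist_triangle _ _ _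
    _ < ε * M + δ := by
        refine add_lt_add_of_le_of_lt ?_ hnx
        rwa [← hsplit, map_add, dist_add_left, Real.dist_eq, abs_sub_comm]
    _ = δ + ε * M := add_comm _ _

def boundedDegreeValues (z : ℕ → ℝ) (M : ℕ) : Set ℝ :=
  weight z '' {n | n.degree ≤ M}

def shiftedValues (z : ℕ → ℝ) (M : ℕ) : Set ℝ :=
  ⋃ m ∈ Finset.Icc 1 M, (· - (m : ℝ)) ⁻¹' boundedDegreeValues z (M - m)

lemma mem_closure_shiftedValues (hzacc : ∀ ε : ℝ, 0 < ε → {k | ε ≤ |z k - 1|}.Finite)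
    {M : ℕ} {x : ℝ}
    (hx : ∀ δ > 0, {n : ℕ →₀ ℕ | n.degree ≤ M ∧ dist (weight z n) x < δ}.Infinite) :
    x ∈ closure (shiftedValues z M) := by
  refine Metric.mem_closure_iff.2 fun ε hε => ?_
  obtain ⟨r, m, hm, hrm, hdist⟩ := exists_shift_near hzacc (ε := ε / (2 * (M + 1)))
    (by positivity) (hx (ε / 2) (by positivity))
  refine ⟨weight z r + m, Set.mem_biUnion (Finset.mem_Icc.2 ⟨hm, (Nat.le_add_left _ _).trans hrm⟩)
    ⟨r, Nat.le_sub_of_add_le hrm, (add_sub_cancel_right _ _).symm⟩, ?_⟩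
  have hM : ε / (2 * (M + 1)) * M ≤ ε / 2 := by
    rw [div_mul_eq_mul_div, div_le_div_iff₀ (by positivity) two_pos]
    nlinarith
  rw [dist_comm]
  linarith

lemma shiftedValues_subset {k : ℕ} (hk : z k = 1) (M : ℕ) :
    shiftedValues z M ⊆ boundedDegreeValues z M := by
  intro y hy
  simp only [shiftedValues, Set.mem_iUnion, Finset.mem_Icc, Set.mem_preimage] at hy
  obtain ⟨m, ⟨-, hmM⟩, r, hr, hry⟩ := hy
  refine ⟨r + single k m, ?_, ?_⟩
  · rw [Set.mem_ofPred_eq, map_add, degree_single]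
    exact Nat.add_le_of_le_sub hmM hr
  · rw [weight_add_single_of_eq_one hk, hry, sub_add_cancel]

lemma isClosed_shiftedValues_of_forall_lt {M : ℕ}
    (h : ∀ M' < M, IsClosed (boundedDegreeValues z M')) : IsClosed (shiftedValues z M) :=
  isClosed_biUnion_finset fun _ hm =>
    (h _ (Nat.sub_lt_self (Finset.mem_Icc.1 hm).1 (Finset.mem_Icc.1 hm).2)).preimage
      (continuous_sub_right _)

lemma isClosed_boundedDegreeValues {k : ℕ} (hk : z k = 1)
    (hzacc : ∀ ε : ℝ, 0 < ε → {k | ε ≤ |z k - 1|}.Finite) (M : ℕ) :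
    IsClosed (boundedDegreeValues z M) := by
  induction M using Nat.strong_induction_on with
  | _ M ih =>
  refine (isClosed_iff_derivedSet_subset _).2 fun x hx => shiftedValues_subset hk M ?_
  rw [← (isClosed_shiftedValues_of_forall_lt ih).closure_eq]
  exact mem_closure_shiftedValues hzacc fun δ hδ =>
    infinite_setOf_mem_of_accPt_image hx (ball_mem_nhds x hδ)

lemma exists_eq_add_weight_add_of_infinite (hzpos : ∀ k, 0 < z k) {k : ℕ} (hk : z k = 1)
    (hzacc : ∀ ε : ℝ, 0 < ε → {k | ε ≤ |z k - 1|}.Finite) (E0 x : ℝ)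
    (hx : ∀ δ > 0, {n : ℕ →₀ ℕ | dist (E0 + weight z n) x < δ}.Infinite) :
    ∃ r : ℕ →₀ ℕ, ∃ m : ℕ, 0 < m ∧ x = E0 + weight z r + m := by
  obtain ⟨M, hM⟩ := exists_degree_le_of_weight_lt hzpos hzacc (x - E0 + 1)
  have hxM : ∀ δ > 0,
      {n : ℕ →₀ ℕ | n.degree ≤ M ∧ dist (weight z n) (x - E0) < δ}.Infinite := by
    intro δ hδ
    refine (hx (min δ 1) (by positivity)).mono fun n hn => ?_
    rw [Set.mem_ofPred_eq, Real.dist_eq, lt_min_iff] at hn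
    rw [Set.mem_ofPred_eq, Real.dist_eq, show weight z n - (x - E0) = E0 + weight z n - x by ring]
    exact ⟨hM n (by linarith [(abs_lt.1 hn.2).2]), hn.1⟩
  have hx' := (isClosed_shiftedValues_of_forall_lt fun M' _ =>
    isClosed_boundedDegreeValues hk hzacc M').closure_eq ▸ mem_closure_shiftedValues hzacc hxM
  simp only [shiftedValues, Set.mem_iUnion, Finset.mem_Icc, Set.mem_preimage] at hx'
  obtain ⟨m, ⟨hm, -⟩, r, -, hr⟩ := hx'
  exact ⟨r, m, hm, by linarith⟩

lemma infinite_setOf_weight_eq_add (hz1 : {k | z k = 1}.Infinite) (n : ℕ →₀ ℕ) {j : ℕ}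
    (hj : j ≠ 0) : {m : ℕ →₀ ℕ | weight z m = weight z n + j}.Infinite := by
  refine (hz1.image ((add_right_injective n).comp (single_left_injective hj)).injOn).mono ?_
  rintro _ ⟨k, hk, rfl⟩
  exact weight_add_single_of_eq_one hk n j

end ExcitationSpectrum

open ExcitationSpectrum

theorem stmt15_general (z : ℕ → ℝ) (hzpos : ∀ k, 0 < z k)
    (hz1 : {k | z k = 1}.Infinite)
    (hzacc : ∀ ε : ℝ, 0 < ε → {k | ε ≤ |z k - 1|}.Finite)
    (E0 : ℝ) :
    ∀ val : (ℕ →₀ ℕ) → ℝ, (val = fun n => E0 + n.sum fun k c => (c : ℝ) * z k) →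
    ∀ Λ : Set ℝ, Λ = Set.range val →
    ∀ Λa : Set ℝ,
      Λa = {x | AccPt x (Filter.principal Λ) ∨ {n : ℕ →₀ ℕ | val n = x}.Infinite} →
    Λa = {y | ∃ x ∈ Λ, ∃ n : ℕ, 0 < n ∧ y = x + n} ∧ IsClosed Λa ∧ Λa ⊆ Λ := by
  intro val hval Λ hΛ Λa hΛa
  have hval' : ∀ n, val n = E0 + weight z n := fun n => by
    simp [hval, weight_apply, nsmul_eq_mul]
  obtain ⟨k, hk⟩ := hz1.nonempty
  set R := {y | ∃ x ∈ Λ, ∃ n : ℕ, 0 < n ∧ y = x + n}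
  have hRΛ : R ⊆ Λ := by
    rintro _ ⟨_, hx, j, -, rfl⟩
    obtain ⟨n, rfl⟩ := hΛ ▸ hx
    exact hΛ ▸ ⟨n + single k j, by rw [hval', hval', weight_add_single_of_eq_one hk, add_assoc]⟩
  have hΛaR : Λa ⊆ R := by
    intro x hx
    have hcluster : ∀ δ > 0, {n : ℕ →₀ ℕ | dist (E0 + weight z n) x < δ}.Infinite := by
      intro δ hδ
      simp_rw [← hval']
      rcases hΛa ▸ hx with hacc | hmult
      · rw [hΛ, ← Set.image_univ] at hacc
        simpa using infinite_setOf_mem_of_accPt_image hacc (ball_mem_nhds x hδ)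
      · exact hmult.mono fun n hn => by simpa [hn.out] using hδ
    obtain ⟨r, m, hm, rfl⟩ := exists_eq_add_weight_add_of_infinite hzpos hk hzacc E0 x hcluster
    exact ⟨val r, hΛ ▸ ⟨r, rfl⟩, m, hm, by rw [hval']⟩
  have hRΛa : R ⊆ Λa := by
    rintro _ ⟨_, hx, j, hj, rfl⟩
    obtain ⟨n, rfl⟩ := hΛ ▸ hx
    refine hΛa ▸ Or.inr ((infinite_setOf_weight_eq_add hz1 n hj.ne').mono fun m hm => ?_)
    rw [Set.mem_ofPred_eq, hval', hval', hm.out, add_assoc]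
  have hΛa_eq : Λa = R := hΛaR.antisymm hRΛa
  have hΛa_sub : Λa ⊆ Λ := hΛa_eq ▸ hRΛ
  refine ⟨hΛa_eq, (isClosed_iff_derivedSet_subset _).2 ?_, hΛa_sub⟩
  exact (derivedSet_mono _ _ hΛa_sub).trans fun x hx => hΛa ▸ Or.inl hx

/-- Essential spectrum of the approximate Ornstein–Uhlenbeck type operator:
with eigenvalue moduli `z k ≥ 0` (of the form arising from `I + T_ξ`: all positive,
infinitely many equal to `1`, accumulating only at `1`) and ground energy `E₀ ≥ 0`,
let `Λ = {E₀ + Σ n_k z k : n finitely supported}` (a multiset via the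
parametrization `n ↦ val n`) and let `Λᵃ` be the set of accumulation points of `Λ`
together with the points of infinite multiplicity. Then `Λᵃ = Λ + ℕ`, `Λᵃ` is
closed, and `Λᵃ ⊆ Λ`. -/
theorem stmt15 (z : ℕ → ℝ) (hzpos : ∀ k, 0 < z k)
    (hz1 : {k | z k = 1}.Infinite)
    (hzacc : ∀ ε : ℝ, 0 < ε → {k | ε ≤ |z k - 1|}.Finite)
    (E0 : ℝ) (hE0 : 0 ≤ E0) :
    ∀ val : (ℕ →₀ ℕ) → ℝ, (val = fun n => E0 + n.sum fun k c => (c : ℝ) * z k) →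
    ∀ Λ : Set ℝ, Λ = Set.range val →
    ∀ Λa : Set ℝ,
      Λa = {x | AccPt x (Filter.principal Λ) ∨ {n : ℕ →₀ ℕ | val n = x}.Infinite} →
    Λa = {y | ∃ x ∈ Λ, ∃ n : ℕ, 0 < n ∧ y = x + n} ∧ IsClosed Λa ∧ Λa ⊆ Λ :=
  stmt15_general z hzpos hz1 hzacc E0
end

section
/- Let $p > 1$ and $\kappa > p - 1$. Then there exists a constant $C > 0$ such that for every continuous $z : [0,1] \to \mathbb{R}^m$, $\|z\|_{p\text{-var}} \le C \Big[\sum_{n=1}^{\infty} n^{\kappa} \sum_{k=1}^{2^n} |z(k 2^{-n}) - z((k-1) 2^{-n})|^p\Big]^{1/p}$, where $\|z\|_{p\text{-var}}$ is the $p$-variation norm of $z$ over $[0,1]$. -/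
private lemma tele_sum {E : Type*} [AddCommGroup E] (f : ℕ → E) {a b : ℕ} (h : a ≤ b) :
    ∑ k ∈ Finset.Ioc a b, (f k - f (k - 1)) = f b - f a := by
  induction b, h using Nat.le_induction with
  | base => simp
  | succ b hb ih => rw [Finset.sum_Ioc_succ_top (by omega), ih]; simp only [Nat.add_sub_cancel]; abel

private lemma two_rpow {u v p : ℝ} (hu : 0 ≤ u) (hv : 0 ≤ v) (hp : 1 ≤ p) :
    (u + v) ^ p ≤ 2 ^ (p - 1) * (u ^ p + v ^ p) := by
  lift u to NNReal using hu
  lift v to NNReal using hv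
  exact_mod_cast NNReal.rpow_add_le_mul_rpow_add_rpow u v hp

private lemma holder_sum {p κ : ℝ} (hp : 1 < p) (hκ : p - 1 < κ) (S : Finset ℕ)
    (hS : ∀ n ∈ S, 1 ≤ n) (g : ℕ → ℝ) (hg : ∀ n, 0 ≤ g n) (A : ℝ)
    (hA : ∑ n ∈ S, (n : ℝ) ^ (-(κ / (p - 1))) ≤ A) :
    (∑ n ∈ S, g n) ^ p ≤ A ^ (p - 1) * ∑ n ∈ S, (n : ℝ) ^ κ * g n ^ p := by
  have hp0 : (0:ℝ) < p := by linarith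
  have hp1 : (0:ℝ) < p - 1 := by linarith
  set q : ℝ := p / (p - 1) with hqdef
  have hq0 : q ≠ 0 := by positivity
  have hpne : p ≠ 0 := ne_of_gt hp0
  have hp1ne : p - 1 ≠ 0 := ne_of_gt hp1
  have hqp : q.HolderConjugate p :=
    ((Real.holderConjugate_iff_eq_conjExponent hp).2 rfl).symm
  set B : ℝ := ∑ n ∈ S, (n : ℝ) ^ (-(κ / (p - 1))) with hBdef
  set D : ℝ := ∑ n ∈ S, (n : ℝ) ^ κ * g n ^ p with hDdef
  have hB0 : 0 ≤ B := Finset.sum_nonneg fun n _ => Real.rpow_nonneg (Nat.cast_nonneg n) _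
  have hD0 : 0 ≤ D := Finset.sum_nonneg fun n _ =>
    mul_nonneg (Real.rpow_nonneg (Nat.cast_nonneg n) _) (Real.rpow_nonneg (hg n) _)
  have key : ∑ n ∈ S, g n ≤ B ^ (1/q) * D ^ (1/p) := by
    have h2 := Real.inner_le_Lp_mul_Lq_of_nonneg S (f := fun n => (n:ℝ) ^ (-(κ/p)))
      (g := fun n => (n:ℝ) ^ (κ/p) * g n) hqp
      (fun n _ => Real.rpow_nonneg (Nat.cast_nonneg n) _)
      (fun n _ => mul_nonneg (Real.rpow_nonneg (Nat.cast_nonneg n) _) (hg n))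
    have e0 : ∑ i ∈ S, ((i:ℝ) ^ (-(κ/p))) * ((i:ℝ) ^ (κ/p) * g i) = ∑ n ∈ S, g n := by
      refine Finset.sum_congr rfl fun n hn => ?_
      have hn1 : (1:ℝ) ≤ (n:ℝ) := by exact_mod_cast hS n hn
      rw [← mul_assoc, ← Real.rpow_add (by linarith), neg_add_cancel, Real.rpow_zero, one_mul]
    have e1 : ∑ n ∈ S, ((n:ℝ) ^ (-(κ/p))) ^ q = B := by
      refine Finset.sum_congr rfl fun n hn => ?_
      rw [← Real.rpow_mul (Nat.cast_nonneg n)]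
      congr 1
      rw [hqdef]
      field_simp
    have e2 : ∑ n ∈ S, ((n:ℝ) ^ (κ/p) * g n) ^ p = D := by
      refine Finset.sum_congr rfl fun n hn => ?_
      rw [Real.mul_rpow (Real.rpow_nonneg (Nat.cast_nonneg n) _) (hg n),
        ← Real.rpow_mul (Nat.cast_nonneg n), div_mul_cancel₀ _ (ne_of_gt hp0)]
    rw [e0, e1, e2] at h2
    exact h2
  calc (∑ n ∈ S, g n) ^ p ≤ (B ^ (1/q) * D ^ (1/p)) ^ p :=
        Real.rpow_le_rpow (Finset.sum_nonneg fun n _ => hg n) key hp0.le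
    _ = B ^ (p-1) * D := by
        rw [Real.mul_rpow (Real.rpow_nonneg hB0 _) (Real.rpow_nonneg hD0 _),
          ← Real.rpow_mul hB0, ← Real.rpow_mul hD0, one_div_mul_cancel (ne_of_gt hp0),
          Real.rpow_one]
        congr 2
        rw [hqdef]
        field_simp
    _ ≤ A ^ (p-1) * D := by
        exact mul_le_mul_of_nonneg_right (Real.rpow_le_rpow hB0 hA hp1.le) hD0

private def rr (M n x : ℕ) : ℕ := x / 2 ^ (M - n)

private def lev (M d : ℕ) : ℕ := max 1 (M - Nat.log 2 d)

private noncomputable def Yf {E : Type*} [NormedAddCommGroup E] (z : ℝ → E) (n k : ℕ) : ℝ :=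
  if k = 0 then 0 else ‖z ((k:ℝ)/2^n) - z (((k:ℝ)-1)/2^n)‖

private lemma Yf_nonneg {E : Type*} [NormedAddCommGroup E] (z : ℝ → E) (n k : ℕ) :
    0 ≤ Yf z n k := by
  unfold Yf; split <;> simp [norm_nonneg]

private lemma Yf_eq {E : Type*} [NormedAddCommGroup E] (z : ℝ → E) (n k : ℕ) (hk : 1 ≤ k) :
    Yf z n k = ‖z ((k:ℝ)/2^n) - z (((k:ℝ)-1)/2^n)‖ := by
  unfold Yf; rw [if_neg (by omega)]

private lemma rr_mono (M n : ℕ) {x y : ℕ} (h : x ≤ y) : rr M n x ≤ rr M n y :=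
  Nat.div_le_div_right h

private lemma rr_le (M n : ℕ) {x : ℕ} (hx : x ≤ 2^M) (hn : n ≤ M) : rr M n x ≤ 2^n := by
  unfold rr
  calc x / 2^(M-n) ≤ 2^M / 2^(M-n) := Nat.div_le_div_right hx
    _ = 2^(M-(M-n)) := Nat.pow_div (Nat.sub_le M n) (by norm_num)
    _ = 2^n := by congr 1; omega

private lemma rr_last (M x : ℕ) : rr M M x = x := by simp [rr]

private lemma rr_one_le (M n x : ℕ) (h : 2^(M-n) ≤ x) : 1 ≤ rr M n x :=
  (Nat.one_le_div_iff (by positivity)).2 h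

private lemma lev_one_le (M d : ℕ) : 1 ≤ lev M d := le_max_left _ _

private lemma lev_le_M {M : ℕ} (hM : 1 ≤ M) (d : ℕ) : lev M d ≤ M :=
  max_le hM (Nat.sub_le M _)

private lemma lev_pow_le {M d : ℕ} (hd : 1 ≤ d) : 2 ^ (M - lev M d) ≤ d := by
  have h1 : M - lev M d ≤ Nat.log 2 d := by
    have := le_max_right 1 (M - Nat.log 2 d)
    unfold lev; omega
  calc (2:ℕ) ^ (M - lev M d) ≤ 2 ^ Nat.log 2 d := Nat.pow_le_pow_right (by norm_num) h1
    _ ≤ d := Nat.pow_log_le_self 2 (by omega)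

private lemma lev_pow2_le {M d n : ℕ} (hd : 1 ≤ d) (h : lev M d < n) (hn : n ≤ M) :
    2 * 2 ^ (M - n) ≤ d := by
  calc 2 * 2^(M-n) = 2^(M-n+1) := (pow_succ' 2 _).symm
    _ ≤ 2^(M - lev M d) := Nat.pow_le_pow_right (by norm_num) (by omega)
    _ ≤ d := lev_pow_le hd

private lemma card_base {M a b : ℕ} (hM : 1 ≤ M) (hab : a < b) (hb : b ≤ 2^M) :
    rr M (lev M (b-a)) b - rr M (lev M (b-a)) a ≤ 2 := by
  set L := Nat.log 2 (b-a) with hL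
  have hLM : L ≤ M := by
    rw [hL]
    calc Nat.log 2 (b-a) ≤ Nat.log 2 (2^M) := Nat.log_mono_right (by omega)
      _ = M := Nat.log_pow (by norm_num) M
  rcases le_or_gt (M - L) 1 with h1 | h1
  · -- lev = 1
    have hlev : lev M (b-a) = 1 := by unfold lev; omega
    rw [hlev]
    have : rr M 1 b ≤ 2 := rr_le M 1 hb hM
    omega
  · have hlev : lev M (b-a) = M - L := by unfold lev; omega
    rw [hlev]
    have hsub : M - (M - L) = L := by omega
    have hd2 : b - a < 2 * 2^L := by
      have := Nat.lt_pow_succ_log_self (b:=2) (by norm_num) (b-a)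
      rw [← hL] at this
      calc b - a < 2 ^ (L+1) := this
        _ = 2 * 2^L := by rw [pow_succ]; ring
    unfold rr
    rw [hsub]
    have hble : b ≤ a + 2 * 2^L := by omega
    have : b / 2^L ≤ (a + 2 * 2^L) / 2^L := Nat.div_le_div_right hble
    rw [Nat.add_mul_div_right a 2 (by positivity)] at this
    omega

private lemma same_div_close {x y q : ℕ} (hq : 0 < q) (hxy : x ≤ y) (h : x / q = y / q) :
    y - x < q := by
  have h1 : q * (y / q) + q > y := by
    have := Nat.mod_lt y hq
    have := Nat.div_add_mod y q
    omega
  have h2 : q * (x / q) ≤ x := Nat.mul_div_le x q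
  rw [← h] at h1
  omega

private lemma step_norm {E : Type*} [NormedAddCommGroup E] (z : ℝ → E) (M j x : ℕ)
    (hj : j + 1 ≤ M) :
    ‖z ((rr M (j+1) x : ℝ)/2^(j+1)) - z ((rr M j x : ℝ)/2^j)‖ ≤ Yf z (j+1) (rr M (j+1) x) := by
  set k := rr M (j+1) x with hk
  have hhalf : rr M j x = k / 2 := by
    rw [hk]
    unfold rr
    rw [Nat.div_div_eq_div_mul]
    congr 1
    rw [← pow_succ]
    congr 1
    omega
  rcases Nat.eq_zero_or_pos k with hk0 | hk0
  · rw [hhalf, hk0]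
    norm_num
    exact Yf_nonneg z _ _
  rcases Nat.even_or_odd k with ⟨c, hc⟩ | ⟨c, hc⟩
  · -- even : k = c + c, points coincide
    have h2 : k / 2 = c := by omega
    have hpt : (k : ℝ)/2^(j+1) = (c : ℝ)/2^j := by
      have : (k:ℝ) = 2 * c := by exact_mod_cast congrArg Nat.cast hc |>.trans (by push_cast; ring)
      rw [this, pow_succ']
      rw [mul_div_mul_left _ _ (by norm_num : (2:ℝ) ≠ 0)]
    rw [hhalf, h2, hpt, sub_self, norm_zero]
    exact Yf_nonneg z _ _
  · -- odd : k = 2c+1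
    have h2 : k / 2 = c := by omega
    have hpt : (c : ℝ)/2^j = ((k:ℝ)-1)/2^(j+1) := by
      have : (k:ℝ) - 1 = 2 * c := by
        have : (k:ℕ) = 2*c+1 := hc
        have := congrArg (Nat.cast : ℕ → ℝ) this
        push_cast at this
        linarith
      rw [this, pow_succ', mul_div_mul_left _ _ (by norm_num : (2:ℝ) ≠ 0)]
    rw [hhalf, h2, hpt, Yf_eq z _ _ hk0]

private lemma base_eq {E : Type*} [NormedAddCommGroup E] (z : ℝ → E) (n : ℕ) {a b : ℕ}
    (h : a ≤ b) :
    z ((b:ℝ)/2^n) - z ((a:ℝ)/2^n)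
      = ∑ k ∈ Finset.Ioc a b, (z ((k:ℝ)/2^n) - z (((k:ℝ)-1)/2^n)) := by
  rw [← tele_sum (fun k => z ((k:ℝ)/2^n)) h]
  refine Finset.sum_congr rfl fun k hk => ?_
  have hk1 : 1 ≤ k := by have := (Finset.mem_Ioc.1 hk).1; omega
  have : ((k-1 : ℕ) : ℝ) = (k:ℝ) - 1 := by
    push_cast [hk1]
    ring
  rw [this]
private lemma interval_bound {E : Type*} [NormedAddCommGroup E] {p κ : ℝ} (hp : 1 < p)
    (hκ : p - 1 < κ) (z : ℝ → E) {M : ℕ} (hM : 1 ≤ M) {a b : ℕ} (hab : a < b) (hb : b ≤ 2^M)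
    (A : ℝ) (hA : ∀ S : Finset ℕ, ∑ n ∈ S, (n:ℝ) ^ (-(κ/(p-1))) ≤ A) :
    ‖z ((b:ℝ)/2^M) - z ((a:ℝ)/2^M)‖ ^ p ≤
      2^(p-1) * A^(p-1) * ∑ n ∈ Finset.Icc (lev M (b-a)) M,
        (n:ℝ)^κ * (if n = lev M (b-a)
          then ∑ k ∈ Finset.Ioc (rr M n a) (rr M n b), (Yf z n k)^p
          else (Yf z n (rr M n b))^p + (Yf z n (rr M n a))^p) := by
  have hp0 : (0:ℝ) < p := by linarith
  set n₀ := lev M (b-a) with hn₀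
  have hn₀1 : 1 ≤ n₀ := lev_one_le M _
  have hn₀M : n₀ ≤ M := lev_le_M hM _
  set G : ℕ → ℝ := fun n => if n = n₀
      then ∑ k ∈ Finset.Ioc (rr M n a) (rr M n b), Yf z n k
      else Yf z n (rr M n b) + Yf z n (rr M n a) with hG
  have hG0 : ∀ n, 0 ≤ G n := by
    intro n
    rw [hG]
    dsimp only
    split
    · exact Finset.sum_nonneg fun k _ => Yf_nonneg z _ _
    · exact add_nonneg (Yf_nonneg z _ _) (Yf_nonneg z _ _)
  -- Step 1 : the norm bound
  have hnorm : ‖z ((b:ℝ)/2^M) - z ((a:ℝ)/2^M)‖ ≤ ∑ n ∈ Finset.Icc n₀ M, G n := by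
    have tb : ∑ n ∈ Finset.Ioc n₀ M,
        (z ((rr M n b : ℝ)/2^n) - z ((rr M (n-1) b : ℝ)/2^(n-1)))
        = z ((rr M M b : ℝ)/2^M) - z ((rr M n₀ b : ℝ)/2^n₀) :=
      tele_sum (fun n => z ((rr M n b : ℝ)/2^n)) hn₀M
    have ta : ∑ n ∈ Finset.Ioc n₀ M,
        (z ((rr M n a : ℝ)/2^n) - z ((rr M (n-1) a : ℝ)/2^(n-1)))
        = z ((rr M M a : ℝ)/2^M) - z ((rr M n₀ a : ℝ)/2^n₀) :=
      tele_sum (fun n => z ((rr M n a : ℝ)/2^n)) hn₀M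
    rw [rr_last] at tb ta
    have hid : z ((b:ℝ)/2^M) - z ((a:ℝ)/2^M) =
        (z ((rr M n₀ b : ℝ)/2^n₀) - z ((rr M n₀ a : ℝ)/2^n₀))
        + (∑ n ∈ Finset.Ioc n₀ M,
            (z ((rr M n b : ℝ)/2^n) - z ((rr M (n-1) b : ℝ)/2^(n-1))))
        - (∑ n ∈ Finset.Ioc n₀ M,
            (z ((rr M n a : ℝ)/2^n) - z ((rr M (n-1) a : ℝ)/2^(n-1)))) := by
      rw [tb, ta]; abel
    rw [hid]
    have hbase : ‖z ((rr M n₀ b : ℝ)/2^n₀) - z ((rr M n₀ a : ℝ)/2^n₀)‖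
        ≤ ∑ k ∈ Finset.Ioc (rr M n₀ a) (rr M n₀ b), Yf z n₀ k := by
      rw [base_eq z n₀ (rr_mono M n₀ hab.le)]
      refine (norm_sum_le _ _).trans (Finset.sum_le_sum fun k hk => ?_)
      have hk1 : 1 ≤ k := by have := (Finset.mem_Ioc.1 hk).1; omega
      rw [Yf_eq z _ _ hk1]
    have hstepb : ∀ n ∈ Finset.Ioc n₀ M,
        ‖z ((rr M n b : ℝ)/2^n) - z ((rr M (n-1) b : ℝ)/2^(n-1))‖ ≤ Yf z n (rr M n b) := by
      intro n hn
      rw [Finset.mem_Ioc] at hn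
      obtain ⟨j, rfl⟩ : ∃ j, n = j + 1 := ⟨n - 1, by omega⟩
      simpa using step_norm z M j b (by omega)
    have hstepa : ∀ n ∈ Finset.Ioc n₀ M,
        ‖z ((rr M n a : ℝ)/2^n) - z ((rr M (n-1) a : ℝ)/2^(n-1))‖ ≤ Yf z n (rr M n a) := by
      intro n hn
      rw [Finset.mem_Ioc] at hn
      obtain ⟨j, rfl⟩ : ∃ j, n = j + 1 := ⟨n - 1, by omega⟩
      simpa using step_norm z M j a (by omega)
    calc ‖_ + _ - _‖ ≤ ‖(z ((rr M n₀ b : ℝ)/2^n₀) - z ((rr M n₀ a : ℝ)/2^n₀))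
          + (∑ n ∈ Finset.Ioc n₀ M,
              (z ((rr M n b : ℝ)/2^n) - z ((rr M (n-1) b : ℝ)/2^(n-1))))‖
          + ‖∑ n ∈ Finset.Ioc n₀ M,
              (z ((rr M n a : ℝ)/2^n) - z ((rr M (n-1) a : ℝ)/2^(n-1)))‖ := norm_sub_le _ _
      _ ≤ ‖z ((rr M n₀ b : ℝ)/2^n₀) - z ((rr M n₀ a : ℝ)/2^n₀)‖
          + ‖∑ n ∈ Finset.Ioc n₀ M,
              (z ((rr M n b : ℝ)/2^n) - z ((rr M (n-1) b : ℝ)/2^(n-1)))‖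
          + ‖∑ n ∈ Finset.Ioc n₀ M,
              (z ((rr M n a : ℝ)/2^n) - z ((rr M (n-1) a : ℝ)/2^(n-1)))‖ := by
            gcongr
            exact norm_add_le _ _
      _ ≤ (∑ k ∈ Finset.Ioc (rr M n₀ a) (rr M n₀ b), Yf z n₀ k)
          + (∑ n ∈ Finset.Ioc n₀ M, Yf z n (rr M n b))
          + (∑ n ∈ Finset.Ioc n₀ M, Yf z n (rr M n a)) :=
            add_le_add (add_le_add hbase
              ((norm_sum_le _ _).trans (Finset.sum_le_sum hstepb)))
              ((norm_sum_le _ _).trans (Finset.sum_le_sum hstepa))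
      _ = ∑ n ∈ Finset.Icc n₀ M, G n := by
            have hGbase : G n₀ = ∑ k ∈ Finset.Ioc (rr M n₀ a) (rr M n₀ b), Yf z n₀ k := by
              rw [hG]; dsimp only; rw [if_pos rfl]
            have hGside : ∀ n ∈ Finset.Ioc n₀ M,
                G n = Yf z n (rr M n b) + Yf z n (rr M n a) := by
              intro n hn
              rw [Finset.mem_Ioc] at hn
              rw [hG]; dsimp only; rw [if_neg (by omega)]
            rw [Finset.Icc_eq_cons_Ioc hn₀M, Finset.sum_cons, hGbase,
              Finset.sum_congr rfl hGside, Finset.sum_add_distrib]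
            ring
  -- Step 2 : Hölder
  have hhold := holder_sum hp hκ (Finset.Icc n₀ M)
    (fun n hn => by have := (Finset.mem_Icc.1 hn).1; omega) G hG0 A (hA _)
  -- Step 3 : pointwise bound on G n ^ p
  have hGp : ∀ n ∈ Finset.Icc n₀ M, G n ^ p ≤ 2^(p-1) *
      (if n = n₀
        then ∑ k ∈ Finset.Ioc (rr M n a) (rr M n b), (Yf z n k)^p
        else (Yf z n (rr M n b))^p + (Yf z n (rr M n a))^p) := by
    intro n hn
    rw [hG]
    dsimp only
    by_cases hcase : n = n₀
    · rw [if_pos hcase, if_pos hcase]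
      have habs : ∀ k, Yf z n k = |Yf z n k| := fun k => (abs_of_nonneg (Yf_nonneg z n k)).symm
      calc (∑ k ∈ Finset.Ioc (rr M n a) (rr M n b), Yf z n k) ^ p
          ≤ ((Finset.Ioc (rr M n a) (rr M n b)).card : ℝ) ^ (p-1)
            * ∑ k ∈ Finset.Ioc (rr M n a) (rr M n b), (Yf z n k) ^ p := by
            have := Real.rpow_sum_le_const_mul_sum_rpow (Finset.Ioc (rr M n a) (rr M n b))
              (fun k => Yf z n k) hp.le
            simp only [abs_of_nonneg (Yf_nonneg z n _)] at this
            exact this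
        _ ≤ 2^(p-1) * ∑ k ∈ Finset.Ioc (rr M n a) (rr M n b), (Yf z n k) ^ p := by
            have hcard : ((Finset.Ioc (rr M n a) (rr M n b)).card : ℝ) ≤ 2 := by
              rw [Nat.card_Ioc]
              have := card_base hM hab hb
              rw [← hn₀, ← hcase] at this
              exact_mod_cast this
            exact mul_le_mul_of_nonneg_right
              (Real.rpow_le_rpow (Nat.cast_nonneg _) hcard (by linarith))
              (Finset.sum_nonneg fun k _ => Real.rpow_nonneg (Yf_nonneg z n k) p)
    · rw [if_neg hcase, if_neg hcase]
      exact two_rpow (Yf_nonneg z _ _) (Yf_nonneg z _ _) hp.le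
  calc ‖z ((b:ℝ)/2^M) - z ((a:ℝ)/2^M)‖ ^ p
      ≤ (∑ n ∈ Finset.Icc n₀ M, G n) ^ p :=
        Real.rpow_le_rpow (norm_nonneg _) hnorm hp0.le
    _ ≤ A^(p-1) * ∑ n ∈ Finset.Icc n₀ M, (n:ℝ)^κ * G n ^ p := hhold
    _ ≤ A^(p-1) * ∑ n ∈ Finset.Icc n₀ M, (n:ℝ)^κ * (2^(p-1) *
          (if n = n₀
            then ∑ k ∈ Finset.Ioc (rr M n a) (rr M n b), (Yf z n k)^p
            else (Yf z n (rr M n b))^p + (Yf z n (rr M n a))^p)) := by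
        have hA0 : 0 ≤ A := by
          have := hA ∅
          simpa using this
        refine mul_le_mul_of_nonneg_left (Finset.sum_le_sum fun n hn => ?_)
          (Real.rpow_nonneg hA0 _)
        exact mul_le_mul_of_nonneg_left (hGp n hn) (Real.rpow_nonneg (Nat.cast_nonneg n) κ)
    _ = 2^(p-1) * A^(p-1) * ∑ n ∈ Finset.Icc n₀ M, (n:ℝ)^κ *
          (if n = n₀
            then ∑ k ∈ Finset.Ioc (rr M n a) (rr M n b), (Yf z n k)^p
            else (Yf z n (rr M n b))^p + (Yf z n (rr M n a))^p) := by
        rw [Finset.mul_sum, Finset.mul_sum]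
        refine Finset.sum_congr rfl fun n hn => ?_
        ring
private lemma main_fin {E : Type*} [NormedAddCommGroup E] {p κ : ℝ} (hp : 1 < p)
    (hκ : p - 1 < κ) (z : ℝ → E) (A : ℝ)
    (hA : ∀ S : Finset ℕ, ∑ n ∈ S, (n:ℝ) ^ (-(κ/(p-1))) ≤ A)
    {M : ℕ} (hM : 1 ≤ M) {N : ℕ} (a : Fin (N+1) → ℕ) (ha : Monotone a)
    (hub : ∀ i, a i ≤ 2^M) :
    ∑ i : Fin N, ‖z ((a i.succ : ℝ)/2^M) - z ((a i.castSucc : ℝ)/2^M)‖ ^ p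
      ≤ 3 * 2^(p-1) * A^(p-1) * ∑ n ∈ Finset.Icc 1 M, (n:ℝ)^κ *
          ∑ k ∈ Finset.Icc 1 (2^n), (Yf z n k) ^ p := by
  classical
  have hp0 : (0:ℝ) < p := by linarith
  have hA0 : 0 ≤ A := by simpa using hA ∅
  set s : Finset (Fin N) := Finset.univ.filter (fun i => a i.castSucc < a i.succ) with hs
  have hmem : ∀ i, i ∈ s ↔ a i.castSucc < a i.succ := by
    intro i; rw [hs]; simp
  set H : Fin N → ℕ → ℝ := fun i n =>
    if n = lev M (a i.succ - a i.castSucc)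
      then ∑ k ∈ Finset.Ioc (rr M n (a i.castSucc)) (rr M n (a i.succ)), (Yf z n k)^p
      else (Yf z n (rr M n (a i.succ)))^p + (Yf z n (rr M n (a i.castSucc)))^p with hH
  have hH0 : ∀ i n, 0 ≤ H i n := by
    intro i n
    rw [hH]; dsimp only; split
    · exact Finset.sum_nonneg fun k _ => Real.rpow_nonneg (Yf_nonneg z _ _) _
    · exact add_nonneg (Real.rpow_nonneg (Yf_nonneg z _ _) _)
        (Real.rpow_nonneg (Yf_nonneg z _ _) _)
  have hmono_succ : ∀ {i j : Fin N}, i < j → a i.succ ≤ a j.castSucc := by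
    intro i j hij
    apply ha
    rw [Fin.le_def]
    simp only [Fin.val_succ, Fin.coe_castSucc]
    exact hij
  -- reduce to the sum over s
  have hsum_s : ∑ i : Fin N, ‖z ((a i.succ : ℝ)/2^M) - z ((a i.castSucc : ℝ)/2^M)‖ ^ p
      = ∑ i ∈ s, ‖z ((a i.succ : ℝ)/2^M) - z ((a i.castSucc : ℝ)/2^M)‖ ^ p := by
    refine (Finset.sum_subset (Finset.subset_univ s) ?_).symm
    intro i _ hi
    rw [hmem] at hi
    have hle : a i.castSucc ≤ a i.succ := ha (Fin.castSucc_le_succ i)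
    have heq : a i.castSucc = a i.succ := by omega
    rw [heq, sub_self, norm_zero, Real.zero_rpow (ne_of_gt hp0)]
  -- per-interval bound
  have hbound : ∀ i ∈ s, ‖z ((a i.succ : ℝ)/2^M) - z ((a i.castSucc : ℝ)/2^M)‖ ^ p
      ≤ 2^(p-1) * A^(p-1) *
        ∑ n ∈ Finset.Icc (lev M (a i.succ - a i.castSucc)) M, (n:ℝ)^κ * H i n := by
    intro i hi
    rw [hmem] at hi
    exact interval_bound hp hκ z hM hi (hub _) A hA
  -- rewrite inner sums over Icc 1 M with indicator
  have hind : ∀ i ∈ s, ∑ n ∈ Finset.Icc (lev M (a i.succ - a i.castSucc)) M, (n:ℝ)^κ * H i n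
      = ∑ n ∈ Finset.Icc 1 M, (n:ℝ)^κ *
          (if lev M (a i.succ - a i.castSucc) ≤ n then H i n else 0) := by
    intro i hi
    rw [hmem] at hi
    have h1 : Finset.Icc (lev M (a i.succ - a i.castSucc)) M
        = (Finset.Icc 1 M).filter (fun n => lev M (a i.succ - a i.castSucc) ≤ n) := by
      ext n
      simp only [Finset.mem_Icc, Finset.mem_filter]
      have := lev_one_le M (a i.succ - a i.castSucc)
      constructor
      · intro h; exact ⟨⟨by omega, h.2⟩, h.1⟩
      · intro h; exact ⟨h.2, h.1.2⟩
    rw [h1, Finset.sum_filter]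
    refine Finset.sum_congr rfl fun n hn => ?_
    split_ifs <;> simp
  -- the counting bound per level
  have hcount : ∀ n ∈ Finset.Icc 1 M,
      ∑ i ∈ s, (if lev M (a i.succ - a i.castSucc) ≤ n then H i n else 0)
        ≤ 3 * ∑ k ∈ Finset.Icc 1 (2^n), (Yf z n k) ^ p := by
    intro n hn
    rw [Finset.mem_Icc] at hn
    set Sn : ℝ := ∑ k ∈ Finset.Icc 1 (2^n), (Yf z n k) ^ p with hSn
    have hSn0 : 0 ≤ Sn := Finset.sum_nonneg fun k _ => Real.rpow_nonneg (Yf_nonneg z _ _) _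
    set T1 : Fin N → ℝ := fun i => if lev M (a i.succ - a i.castSucc) < n
        then (Yf z n (rr M n (a i.succ)))^p else 0 with hT1
    set T2 : Fin N → ℝ := fun i => if lev M (a i.succ - a i.castSucc) < n
        then (Yf z n (rr M n (a i.castSucc)))^p else 0 with hT2
    set T3 : Fin N → ℝ := fun i => if lev M (a i.succ - a i.castSucc) = n
        then ∑ k ∈ Finset.Ioc (rr M n (a i.castSucc)) (rr M n (a i.succ)), (Yf z n k)^p
        else 0 with hT3
    have hpt : ∀ i ∈ s, (if lev M (a i.succ - a i.castSucc) ≤ n then H i n else 0)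
        ≤ T1 i + T2 i + T3 i := by
      intro i hi
      rw [hT1, hT2, hT3, hH]
      dsimp only
      rcases lt_trichotomy (lev M (a i.succ - a i.castSucc)) n with h | h | h
      · rw [if_pos h.le, if_neg (show ¬ n = lev M (a i.succ - a i.castSucc) by omega),
          if_pos h, if_pos h, if_neg (show ¬ lev M (a i.succ - a i.castSucc) = n by omega)]
        simp
      · rw [if_pos h.le, if_pos h.symm,
          if_neg (show ¬ lev M (a i.succ - a i.castSucc) < n by omega),
          if_neg (show ¬ lev M (a i.succ - a i.castSucc) < n by omega), if_pos h]
        simp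
      · rw [if_neg (show ¬ lev M (a i.succ - a i.castSucc) ≤ n by omega),
          if_neg (show ¬ lev M (a i.succ - a i.castSucc) < n by omega),
          if_neg (show ¬ lev M (a i.succ - a i.castSucc) < n by omega),
          if_neg (show ¬ lev M (a i.succ - a i.castSucc) = n by omega)]
        simp
    have h2q : ∀ i ∈ s, lev M (a i.succ - a i.castSucc) < n →
        2 * 2^(M-n) ≤ a i.succ - a i.castSucc := by
      intro i hi hlt
      rw [hmem] at hi
      exact lev_pow2_le (by omega) hlt hn.2
    -- bound for T1
    have hB1 : ∑ i ∈ s, T1 i ≤ Sn := by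
      rw [hT1, ← Finset.sum_filter]
      set s1 := s.filter (fun i => lev M (a i.succ - a i.castSucc) < n) with hs1
      have hinj : ∀ i ∈ s1, ∀ j ∈ s1, rr M n (a i.succ) = rr M n (a j.succ) → i = j := by
        intro i hi j hj hφ
        by_contra hne
        rw [hs1, Finset.mem_filter] at hi hj
        have hq : (0:ℕ) < 2^(M-n) := by positivity
        rcases Ne.lt_or_gt hne with hlt | hlt
        · have hc := same_div_close hq (ha (Fin.succ_le_succ_iff.mpr hlt.le)) hφ
          have hd := h2q j hj.1 hj.2
          have := hmono_succ hlt
          have hcs : a j.castSucc ≤ a j.succ := ha (Fin.castSucc_le_succ j)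
          omega
        · have hc := same_div_close hq (ha (Fin.succ_le_succ_iff.mpr hlt.le)) hφ.symm
          have hd := h2q i hi.1 hi.2
          have := hmono_succ hlt
          have hcs : a i.castSucc ≤ a i.succ := ha (Fin.castSucc_le_succ i)
          omega
      have himg : ∀ i ∈ s1, rr M n (a i.succ) ∈ Finset.Icc 1 (2^n) := by
        intro i hi
        rw [hs1, Finset.mem_filter] at hi
        rw [Finset.mem_Icc]
        constructor
        · refine rr_one_le M n _ ?_
          have h1 := h2q i hi.1 hi.2
          have hcs : a i.castSucc ≤ a i.succ := ha (Fin.castSucc_le_succ i)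
          omega
        · exact rr_le M n (hub _) hn.2
      calc ∑ i ∈ s1, (Yf z n (rr M n (a i.succ)))^p
          = ∑ k ∈ s1.image (fun i => rr M n (a i.succ)), (Yf z n k)^p :=
            (Finset.sum_image (f := fun k => (Yf z n k)^p) hinj).symm
        _ ≤ Sn := by
            rw [hSn]
            refine Finset.sum_le_sum_of_subset_of_nonneg ?_
              (fun k _ _ => Real.rpow_nonneg (Yf_nonneg z _ _) _)
            intro k hk
            rw [Finset.mem_image] at hk
            obtain ⟨i, hi, rfl⟩ := hk
            exact himg i hi
    -- bound for T2
    have hB2 : ∑ i ∈ s, T2 i ≤ Sn := by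
      rw [hT2, ← Finset.sum_filter]
      set s1 := s.filter (fun i => lev M (a i.succ - a i.castSucc) < n) with hs1
      have hinj : ∀ i ∈ s1, ∀ j ∈ s1, rr M n (a i.castSucc) = rr M n (a j.castSucc) → i = j := by
        intro i hi j hj hφ
        by_contra hne
        rw [hs1, Finset.mem_filter] at hi hj
        have hq : (0:ℕ) < 2^(M-n) := by positivity
        rcases Ne.lt_or_gt hne with hlt | hlt
        · have hc := same_div_close hq (ha (Fin.castSucc_le_castSucc_iff.mpr hlt.le)) hφ
          have hd := h2q i hi.1 hi.2
          have := hmono_succ hlt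
          omega
        · have hc := same_div_close hq (ha (Fin.castSucc_le_castSucc_iff.mpr hlt.le)) hφ.symm
          have hd := h2q j hj.1 hj.2
          have := hmono_succ hlt
          omega
      have himg : ∀ i ∈ s1, rr M n (a i.castSucc) ∈ Finset.Icc 0 (2^n) := by
        intro i hi
        rw [Finset.mem_Icc]
        exact ⟨Nat.zero_le _, rr_le M n (hub _) hn.2⟩
      have hIcc0 : ∑ k ∈ Finset.Icc 0 (2^n), (Yf z n k)^p = Sn := by
        rw [hSn, Finset.Icc_eq_cons_Ioc (Nat.zero_le _), Finset.sum_cons]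
        have h0 : (Yf z n 0 : ℝ)^p = 0 := by
          rw [Yf]
          simp [Real.zero_rpow (ne_of_gt hp0)]
        rw [h0, zero_add]
        congr 1
      calc ∑ i ∈ s1, (Yf z n (rr M n (a i.castSucc)))^p
          = ∑ k ∈ s1.image (fun i => rr M n (a i.castSucc)), (Yf z n k)^p :=
            (Finset.sum_image (f := fun k => (Yf z n k)^p) hinj).symm
        _ ≤ ∑ k ∈ Finset.Icc 0 (2^n), (Yf z n k)^p := by
            refine Finset.sum_le_sum_of_subset_of_nonneg ?_
              (fun k _ _ => Real.rpow_nonneg (Yf_nonneg z _ _) _)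
            intro k hk
            rw [Finset.mem_image] at hk
            obtain ⟨i, hi, rfl⟩ := hk
            exact himg i hi
        _ = Sn := hIcc0
    -- bound for T3
    have hB3 : ∑ i ∈ s, T3 i ≤ Sn := by
      rw [hT3, ← Finset.sum_filter]
      set s2 := s.filter (fun i => lev M (a i.succ - a i.castSucc) = n) with hs2
      set T : Fin N → Finset ℕ :=
        fun i => Finset.Ioc (rr M n (a i.castSucc)) (rr M n (a i.succ)) with hT
      have hdisj : (↑s2 : Set (Fin N)).PairwiseDisjoint T := by
        intro i hi j hj hne
        have key : ∀ {i' j' : Fin N}, i' < j' → Disjoint (T i') (T j') := by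
          intro i' j' hlt
          rw [hT]
          rw [Finset.disjoint_left]
          intro k hk hk'
          rw [Finset.mem_Ioc] at hk hk'
          have h1 : rr M n (a i'.succ) ≤ rr M n (a j'.castSucc) :=
            rr_mono M n (hmono_succ hlt)
          omega
        rcases Ne.lt_or_gt hne with hlt | hlt
        · exact key hlt
        · exact (key hlt).symm
      have hsub : s2.biUnion T ⊆ Finset.Icc 1 (2^n) := by
        intro k hk
        rw [Finset.mem_biUnion] at hk
        obtain ⟨i, hi, hki⟩ := hk
        rw [hT] at hki
        rw [Finset.mem_Ioc] at hki
        rw [Finset.mem_Icc]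
        have h2 : rr M n (a i.succ) ≤ 2^n := rr_le M n (hub _) hn.2
        omega
      calc ∑ i ∈ s2, ∑ k ∈ Finset.Ioc (rr M n (a i.castSucc)) (rr M n (a i.succ)), (Yf z n k)^p
          = ∑ k ∈ s2.biUnion T, (Yf z n k)^p := (Finset.sum_biUnion hdisj).symm
        _ ≤ Sn := by
            rw [hSn]
            exact Finset.sum_le_sum_of_subset_of_nonneg hsub
              (fun k _ _ => Real.rpow_nonneg (Yf_nonneg z _ _) _)
    calc ∑ i ∈ s, (if lev M (a i.succ - a i.castSucc) ≤ n then H i n else 0)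
        ≤ ∑ i ∈ s, (T1 i + T2 i + T3 i) := Finset.sum_le_sum hpt
      _ = ∑ i ∈ s, T1 i + ∑ i ∈ s, T2 i + ∑ i ∈ s, T3 i := by
          rw [Finset.sum_add_distrib, Finset.sum_add_distrib]
      _ ≤ Sn + Sn + Sn := by gcongr
      _ = 3 * Sn := by ring
  -- assemble
  rw [hsum_s]
  have step1 : ∑ i ∈ s, ‖z ((a i.succ : ℝ)/2^M) - z ((a i.castSucc : ℝ)/2^M)‖ ^ p
      ≤ 2^(p-1) * A^(p-1) * ∑ i ∈ s, ∑ n ∈ Finset.Icc 1 M, (n:ℝ)^κ *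
          (if lev M (a i.succ - a i.castSucc) ≤ n then H i n else 0) := by
    rw [Finset.mul_sum]
    refine Finset.sum_le_sum fun i hi => ?_
    rw [← hind i hi]
    exact hbound i hi
  refine step1.trans ?_
  rw [Finset.sum_comm]
  have step2 : ∑ n ∈ Finset.Icc 1 M, ∑ i ∈ s, (n:ℝ)^κ *
        (if lev M (a i.succ - a i.castSucc) ≤ n then H i n else 0)
      ≤ ∑ n ∈ Finset.Icc 1 M, (n:ℝ)^κ * (3 * ∑ k ∈ Finset.Icc 1 (2^n), (Yf z n k) ^ p) := by
    refine Finset.sum_le_sum fun n hn => ?_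
    rw [← Finset.mul_sum]
    exact mul_le_mul_of_nonneg_left (hcount n hn) (Real.rpow_nonneg (Nat.cast_nonneg n) κ)
  have h2A : (0:ℝ) ≤ 2^(p-1) * A^(p-1) :=
    mul_nonneg (Real.rpow_nonneg (by norm_num) _) (Real.rpow_nonneg hA0 _)
  refine (mul_le_mul_of_nonneg_left step2 h2A).trans (le_of_eq ?_)
  rw [Finset.mul_sum, Finset.mul_sum]
  refine Finset.sum_congr rfl fun n hn => ?_
  ring

/-- Dyadic control of `p`-variation (Lyons–Qian, Prop. 4.1.1): for `p > 1` and
`κ > p - 1` there is `C > 0` such that for every continuous `z : [0,1] → ℝ^m` and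
every finite partition `0 = t_0 ≤ ⋯ ≤ t_N = 1`,
`Σ_i |z(t_i) - z(t_{i-1})|^p ≤ C^p Σ_{n≥1} n^κ Σ_{k=1}^{2^n} |z(k2^{-n}) - z((k-1)2^{-n})|^p`
(equivalently `‖z‖_{p-var} ≤ C ‖z‖_{p,κ}`); the right-hand side is computed in
`ℝ≥0∞` to allow divergence. -/
theorem stmt17 (p κ : ℝ) (hp : 1 < p) (hκ : p - 1 < κ) (m : ℕ) :
    ∃ C : ℝ, 0 < C ∧ ∀ z : ℝ → EuclideanSpace ℝ (Fin m), Continuous z →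
      ∀ (N : ℕ) (t : Fin (N + 1) → ℝ), Monotone t → t 0 = 0 → t (Fin.last N) = 1 →
      ENNReal.ofReal (∑ i : Fin N, ‖z (t i.succ) - z (t i.castSucc)‖ ^ p)
        ≤ ENNReal.ofReal (C ^ p) *
          ∑' n : ℕ, ENNReal.ofReal ((n : ℝ) ^ κ *
            ∑ k ∈ Finset.Icc (1 : ℕ) (2 ^ n),
              ‖z ((k : ℝ) / (2 : ℝ) ^ n) - z (((k : ℝ) - 1) / (2 : ℝ) ^ n)‖ ^ p) := by
  have hp0 : (0:ℝ) < p := by linarith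
  have hpne : p ≠ 0 := ne_of_gt hp0
  have hsum : Summable (fun n : ℕ => (n:ℝ) ^ (-(κ/(p-1)))) := by
    refine Real.summable_nat_rpow.2 ?_
    have h1 : 1 < κ/(p-1) := (one_lt_div (by linarith)).2 (by linarith)
    linarith
  set A : ℝ := ∑' n : ℕ, (n:ℝ) ^ (-(κ/(p-1))) with hAdef
  have hA : ∀ S : Finset ℕ, ∑ n ∈ S, (n:ℝ) ^ (-(κ/(p-1))) ≤ A :=
    fun S => Summable.sum_le_tsum S (fun n _ => Real.rpow_nonneg (Nat.cast_nonneg n) _) hsum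
  have hA1 : (1:ℝ) ≤ A := by
    have h := Summable.le_tsum hsum 1 (fun j _ => Real.rpow_nonneg (Nat.cast_nonneg j) _)
    simpa using h
  have hA0 : (0:ℝ) < A := lt_of_lt_of_le one_pos hA1
  set K : ℝ := 3 * 2^(p-1) * A^(p-1) with hK
  have hK0 : 0 < K := by
    have h1 : (0:ℝ) < (2:ℝ)^(p-1) := Real.rpow_pos_of_pos (by norm_num) _
    have h2 : (0:ℝ) < A^(p-1) := Real.rpow_pos_of_pos hA0 _
    positivity
  refine ⟨K ^ (1/p), Real.rpow_pos_of_pos hK0 _, ?_⟩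
  intro z hz N t ht ht0 ht1
  have hKp : (K ^ (1/p)) ^ p = K := by
    rw [← Real.rpow_mul hK0.le, one_div_mul_cancel hpne, Real.rpow_one]
  rw [hKp]
  -- bounds on t
  have htub : ∀ i, t i ≤ 1 := by
    intro i
    rw [← ht1]
    exact ht (Fin.le_last i)
  have htlb : ∀ i, 0 ≤ t i := by
    intro i
    rw [← ht0]
    exact ht (Fin.zero_le i)
  -- the approximating sums
  set T : ENNReal := ∑' n : ℕ, ENNReal.ofReal ((n : ℝ) ^ κ *
      ∑ k ∈ Finset.Icc (1 : ℕ) (2 ^ n),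
        ‖z ((k : ℝ) / (2 : ℝ) ^ n) - z (((k : ℝ) - 1) / (2 : ℝ) ^ n)‖ ^ p) with hT
  have hYsum : ∀ n : ℕ, ∑ k ∈ Finset.Icc 1 (2^n), (Yf z n k) ^ p
      = ∑ k ∈ Finset.Icc (1:ℕ) (2 ^ n),
          ‖z ((k : ℝ) / (2 : ℝ) ^ n) - z (((k : ℝ) - 1) / (2 : ℝ) ^ n)‖ ^ p := by
    intro n
    refine Finset.sum_congr rfl fun k hk => ?_
    rw [Finset.mem_Icc] at hk
    rw [Yf_eq z n k hk.1]
  -- key finite bound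
  have hfin : ∀ M : ℕ, 1 ≤ M →
      ENNReal.ofReal (∑ i : Fin N,
        ‖z ((((⌊t i.succ * 2^M⌋₊ : ℕ)) : ℝ)/2^M) - z (((⌊t i.castSucc * 2^M⌋₊ : ℕ) : ℝ)/2^M)‖ ^ p)
      ≤ ENNReal.ofReal K * T := by
    intro M hM
    set aM : Fin (N+1) → ℕ := fun i => ⌊t i * 2^M⌋₊ with haM
    have haMono : Monotone aM := by
      intro i j hij
      exact Nat.floor_mono (mul_le_mul_of_nonneg_right (ht hij) (by positivity))
    have haUb : ∀ i, aM i ≤ 2^M := by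
      intro i
      rw [haM]
      calc ⌊t i * 2^M⌋₊ ≤ ⌊((2^M : ℕ) : ℝ)⌋₊ := by
            refine Nat.floor_mono ?_
            push_cast
            calc t i * 2^M ≤ 1 * 2^M := by
                  exact mul_le_mul_of_nonneg_right (htub i) (by positivity)
              _ = 2^M := one_mul _
        _ = 2^M := Nat.floor_natCast _
    have h1 := main_fin hp hκ z A hA hM aM haMono haUb
    rw [← hK] at h1
    simp only [hYsum] at h1
    calc ENNReal.ofReal (∑ i : Fin N,
          ‖z (((aM i.succ : ℕ) : ℝ)/2^M) - z (((aM i.castSucc : ℕ) : ℝ)/2^M)‖ ^ p)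
        ≤ ENNReal.ofReal (K * ∑ n ∈ Finset.Icc 1 M, (n:ℝ)^κ *
            ∑ k ∈ Finset.Icc (1:ℕ) (2 ^ n),
              ‖z ((k : ℝ) / (2 : ℝ) ^ n) - z (((k : ℝ) - 1) / (2 : ℝ) ^ n)‖ ^ p) := by
          exact ENNReal.ofReal_le_ofReal h1
      _ = ENNReal.ofReal K * ENNReal.ofReal (∑ n ∈ Finset.Icc 1 M, (n:ℝ)^κ *
            ∑ k ∈ Finset.Icc (1:ℕ) (2 ^ n),
              ‖z ((k : ℝ) / (2 : ℝ) ^ n) - z (((k : ℝ) - 1) / (2 : ℝ) ^ n)‖ ^ p) :=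
          ENNReal.ofReal_mul hK0.le
      _ ≤ ENNReal.ofReal K * T := by
          refine mul_le_mul_right ?_ _
          rw [ENNReal.ofReal_sum_of_nonneg]
          · rw [hT]
            exact ENNReal.sum_le_tsum _
          · intro n hn
            refine mul_nonneg (Real.rpow_nonneg (Nat.cast_nonneg n) _) ?_
            exact Finset.sum_nonneg fun k _ => Real.rpow_nonneg (norm_nonneg _) _
  -- convergence of the dyadic approximations
  have hfloor : ∀ x : ℝ, 0 ≤ x →
      Filter.Tendsto (fun M : ℕ => ((⌊x * 2^M⌋₊ : ℕ) : ℝ)/2^M) Filter.atTop (nhds x) := by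
    intro x hx
    have hlow : ∀ M : ℕ, x - (1/2:ℝ)^M ≤ ((⌊x * 2^M⌋₊ : ℕ) : ℝ)/2^M := by
      intro M
      have h2 : (0:ℝ) < (2:ℝ)^M := by positivity
      have h1 : x * 2^M - 1 < ((⌊x * 2^M⌋₊ : ℕ) : ℝ) := Nat.sub_one_lt_floor _
      have h3 : ((1:ℝ)/2)^M * 2^M = 1 := by
        rw [div_pow, one_pow]
        field_simp
      rw [le_div_iff₀ h2]
      nlinarith [h1, h3]
    have hup : ∀ M : ℕ, ((⌊x * 2^M⌋₊ : ℕ) : ℝ)/2^M ≤ x := by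
      intro M
      have h2 : (0:ℝ) < (2:ℝ)^M := by positivity
      rw [div_le_iff₀ h2]
      exact Nat.floor_le (by positivity)
    have hltend : Filter.Tendsto (fun M : ℕ => x - (1/2:ℝ)^M) Filter.atTop (nhds x) := by
      have h0 : Filter.Tendsto (fun M : ℕ => ((1:ℝ)/2)^M) Filter.atTop (nhds 0) :=
        tendsto_pow_atTop_nhds_zero_of_lt_one (by norm_num) (by norm_num)
      have h4 := (tendsto_const_nhds :
        Filter.Tendsto (fun _ : ℕ => x) Filter.atTop (nhds x)).sub h0
      simpa using h4
    exact tendsto_of_tendsto_of_tendsto_of_le_of_le hltend tendsto_const_nhds hlow hup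
  -- pass to the limit
  have htend : Filter.Tendsto (fun M : ℕ => ENNReal.ofReal (∑ i : Fin N,
      ‖z ((((⌊t i.succ * 2^M⌋₊ : ℕ)) : ℝ)/2^M) - z (((⌊t i.castSucc * 2^M⌋₊ : ℕ) : ℝ)/2^M)‖ ^ p))
      Filter.atTop
      (nhds (ENNReal.ofReal (∑ i : Fin N, ‖z (t i.succ) - z (t i.castSucc)‖ ^ p))) := by
    refine (ENNReal.continuous_ofReal.tendsto _).comp ?_
    refine tendsto_finset_sum _ fun i _ => ?_
    have hb : Filter.Tendsto (fun M : ℕ => z (((⌊t i.succ * 2^M⌋₊ : ℕ) : ℝ)/2^M))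
        Filter.atTop (nhds (z (t i.succ))) :=
      (hz.tendsto _).comp (hfloor _ (htlb _))
    have ha : Filter.Tendsto (fun M : ℕ => z (((⌊t i.castSucc * 2^M⌋₊ : ℕ) : ℝ)/2^M))
        Filter.atTop (nhds (z (t i.castSucc))) :=
      (hz.tendsto _).comp (hfloor _ (htlb _))
    have hnorm := (hb.sub ha).norm
    exact ((Real.continuousAt_rpow_const _ p (Or.inr hp0.le)).tendsto).comp hnorm
  refine le_of_tendsto htend ?_
  filter_upwards [Filter.eventually_ge_atTop 1] with M hM
  exact hfin M hM
end
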